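/- arXiv:2511.07108 — 9 statements merged into one kernel-verified Lean document; each statement's English description precedes it below -/
import Mathlib

section
/- Let Ω be a semigroup, A a vector space over a field k, and (*_{α,β})_{α,β∈Ω} a family of bilinear maps A⊗A→A satisfying the Ω-associativity law (a *_{α,β} b) *_{αβ,γ} c = a *_{α,βγ} (b *_{β,γ} c). Then the space A⊗k[Ω] with product (x⊗α)*(y⊗β) = (x *_{α,β} y)⊗(αβ) is an associative algebra. Conversely, if this product on A⊗k[Ω] is associative, then the family (*_{α,β}) satisfies the Ω-associativity law. -/
/-!
On pure tensors `x ⊗ α`, `y ⊗ β`, `z ⊗ γ` the two bracketings of the product on `A ⊗ k[Ω]` are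
`(·) ⊗ αβγ` applied to the two sides of the Ω-associativity law. Since the `α` form a basis of
`k[Ω]`, the map `x ↦ x ⊗ α` is injective, which gives one direction; and the pure tensors span
`A ⊗ k[Ω]`, so associativity of a bilinear product on them propagates everywhere, which gives
the other.
-/

open TensorProduct

namespace TensorProduct

variable {R M N κ : Type*} [CommSemiring R] [AddCommMonoid M] [AddCommMonoid N]
  [Module R M] [Module R N]

theorem tmul_basis_right_injective (𝒞 : Module.Basis κ R N) (i : κ) :
    Function.Injective fun m : M => m ⊗ₜ[R] 𝒞 i := by
  have hsingle : (fun m : M => m ⊗ₜ[R] 𝒞 i) =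
      (Finsupp.lsum R fun j => (TensorProduct.mk R M N).flip (𝒞 j)) ∘ Finsupp.single i := by
    ext m; simp
  rw [hsingle]
  exact (sum_tmul_basis_right_injective 𝒞).comp (Finsupp.single_injective i)

theorem span_tmul_basis_right_eq_top (𝒞 : Module.Basis κ R N) :
    Submodule.span R (Set.range fun p : M × κ => p.1 ⊗ₜ[R] 𝒞 p.2) = ⊤ := by
  refine Submodule.eq_top_iff'.mpr fun x => ?_
  obtain ⟨b, rfl⟩ := eq_repr_basis_right 𝒞 x
  exact Submodule.sum_mem _ fun i _ => Submodule.subset_span ⟨(b i, i), rfl⟩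

end TensorProduct

theorem LinearMap.assoc_of_span_eq_top {R M ι : Type*} [CommSemiring R] [AddCommMonoid M]
    [Module R M] (μ : M →ₗ[R] M →ₗ[R] M) {v : ι → M} (hv : Submodule.span R (Set.range v) = ⊤)
    (h : ∀ i j l, μ (μ (v i) (v j)) (v l) = μ (v i) (μ (v j) (v l))) (x y z : M) :
    μ (μ x y) z = μ x (μ y z) := by
  -- the two bracketings, as trilinear maps `(x, y, z) ↦ μ (μ x y) z` and `(x, y, z) ↦ μ x (μ y z)`
  have : μ.compr₂ μ = (LinearMap.llcomp R M M M).compl₂ μ ∘ₗ μ :=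
    ext_on_range hv fun i => ext_on_range hv fun j => ext_on_range hv fun l => h i j l
  exact congr($this x y z)

/-- The product `(x⊗α)*(y⊗β) = (x *_{α,β} y)⊗(αβ)` on `A ⊗ k[Ω]` is
associative if and only if the family `(*_{α,β})` satisfies the Ω-associativity law. -/
theorem omega_assoc_iff_tensor_assoc
    {k Ω A : Type*} [Field k] [Semigroup Ω] [AddCommGroup A] [Module k A]
    (mul : Ω → Ω → A →ₗ[k] A →ₗ[k] A)
    (mulB : TensorProduct k A (MonoidAlgebra k Ω) →ₗ[k]
      TensorProduct k A (MonoidAlgebra k Ω) →ₗ[k] TensorProduct k A (MonoidAlgebra k Ω))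
    (hdef : ∀ (α β : Ω) (x y : A),
      mulB (x ⊗ₜ[k] MonoidAlgebra.single α 1) (y ⊗ₜ[k] MonoidAlgebra.single β 1)
        = (mul α β x y) ⊗ₜ[k] MonoidAlgebra.single (α * β) 1) :
    (∀ u v w : TensorProduct k A (MonoidAlgebra k Ω),
        mulB (mulB u v) w = mulB u (mulB v w))
      ↔ (∀ (α β γ : Ω) (x y z : A),
        mul (α * β) γ (mul α β x y) z = mul α (β * γ) x (mul β γ y z)) := by
  have hbasis := MonoidAlgebra.basis_apply (R := Ω) k
  have assoc_tmul_single_iff : ∀ (α β γ : Ω) (x y z : A),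
      (mulB (mulB (x ⊗ₜ MonoidAlgebra.single α 1) (y ⊗ₜ MonoidAlgebra.single β 1))
          (z ⊗ₜ MonoidAlgebra.single γ 1) =
        mulB (x ⊗ₜ MonoidAlgebra.single α 1)
          (mulB (y ⊗ₜ MonoidAlgebra.single β 1) (z ⊗ₜ MonoidAlgebra.single γ 1))) ↔
      mul (α * β) γ (mul α β x y) z = mul α (β * γ) x (mul β γ y z) := by
    intro α β γ x y z
    rw [hdef, hdef, hdef, hdef, mul_assoc, ← hbasis]
    exact (TensorProduct.tmul_basis_right_injective _ _).eq_iff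
  constructor
  · intro h α β γ x y z
    exact (assoc_tmul_single_iff α β γ x y z).mp (h _ _ _)
  · intro h
    refine mulB.assoc_of_span_eq_top
      (v := fun p : A × Ω => p.1 ⊗ₜ MonoidAlgebra.single p.2 1) ?_
      fun p q r => (assoc_tmul_single_iff p.2 q.2 r.2 p.1 q.1 r.1).mpr (h _ _ _ _ _ _)
    simpa only [hbasis] using
      TensorProduct.span_tmul_basis_right_eq_top (M := A) (MonoidAlgebra.basis Ω k)
end

section
/- Let Ω be a semigroup and (D, (≺_α)_{α∈Ω}, (≻_α)_{α∈Ω}) a dendriform family algebra, i.e., bilinear operations satisfying (x≺_α y)≺_β z = x≺_{αβ}(y≺_β z + y≻_α z), (x≻_α y)≺_β z = x≻_α(y≺_β z), and (x≺_β y + x≻_α y)≻_{αβ} z = x≻_α(y≻_β z). Then the operations x *_{α,β} y := x≻_α y + x≺_β y make D into an Ω-associative algebra. -/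
/-- A dendriform family algebra yields an Ω-associative algebra via
`x *_{α,β} y = x ≻_α y + x ≺_β y`. -/
theorem dendriformFamily_omega_assoc
    {k Ω D : Type*} [Field k] [Semigroup Ω] [AddCommGroup D] [Module k D]
    (pre post : Ω → D →ₗ[k] D →ₗ[k] D)
    (h1 : ∀ (α β : Ω) (x y z : D),
      pre β (pre α x y) z = pre (α * β) x (pre β y z + post α y z))
    (h2 : ∀ (α β : Ω) (x y z : D),
      pre β (post α x y) z = post α x (pre β y z))
    (h3 : ∀ (α β : Ω) (x y z : D),
      post (α * β) (pre β x y + post α x y) z = post α x (post β y z)) :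
    ∀ (α β γ : Ω) (x y z : D),
      post (α * β) (post α x y + pre β x y) z + pre γ (post α x y + pre β x y) z
      = post α x (post β y z + pre γ y z) + pre (β * γ) x (post β y z + pre γ y z) := by
  intro α β γ x y z
  have e3 := h3 α β x y z
  have e2 := h2 α γ x y z
  have e1 := h1 β γ x y z
  simp only [map_add, LinearMap.add_apply] at *
  rw [e2, e1, ← e3]; abel
end

section
/- Let Ω be a commutative semigroup and (A, (∘_{α,β})_{α,β∈Ω}) an Ω-pre-Lie algebra, i.e., bilinear operations satisfying (x∘_{α,β}y)∘_{αβ,γ}z − x∘_{α,βγ}(y∘_{β,γ}z) = (y∘_{β,α}x)∘_{βα,γ}z − y∘_{β,αγ}(x∘_{α,γ}z). Then the brackets [x,y]_{α,β} := x∘_{α,β}y − y∘_{β,α}x make A into an Ω-Lie algebra: they are antisymmetric in the sense [x,y]_{α,β} = −[y,x]_{β,α} and satisfy the Ω-Jacobi identity [[x,y]_{α,β}, z]_{αβ,γ} = [x,[y,z]_{β,γ}]_{α,βγ} − [y,[x,z]_{α,γ}]_{β,αγ}. -/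
/-- The commutator-type bracket `[x,y]_{α,β} = x ∘_{α,β} y − y ∘_{β,α} x`. -/
def omegaBracket {k Ω A : Type*} [Field k] [Mul Ω] [AddCommGroup A] [Module k A]
    (circ : Ω → Ω → A →ₗ[k] A →ₗ[k] A) (α β : Ω) (x y : A) : A :=
  circ α β x y - circ β α y x

/-- An Ω-pre-Lie algebra gives an Ω-Lie algebra via
`[x,y]_{α,β} = x∘_{α,β}y − y∘_{β,α}x`. -/
theorem omegaPreLie_omega_Lie
    {k Ω A : Type*} [Field k] [CommSemigroup Ω] [AddCommGroup A] [Module k A]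
    (circ : Ω → Ω → A →ₗ[k] A →ₗ[k] A)
    (hpl : ∀ (α β γ : Ω) (x y z : A),
      circ (α * β) γ (circ α β x y) z - circ α (β * γ) x (circ β γ y z)
        = circ (β * α) γ (circ β α y x) z - circ β (α * γ) y (circ α γ x z)) :
    (∀ (α β : Ω) (x y : A),
      omegaBracket circ α β x y = -omegaBracket circ β α y x)
    ∧ (∀ (α β γ : Ω) (x y z : A),
      omegaBracket circ (α * β) γ (omegaBracket circ α β x y) z
        = omegaBracket circ α (β * γ) x (omegaBracket circ β γ y z)
          - omegaBracket circ β (α * γ) y (omegaBracket circ α γ x z)) := by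
  constructor
  · intro α β x y; simp [omegaBracket]
  · intro α β γ x y z
    have h1 := hpl α γ β x z y
    have h2 := hpl β α γ y x z
    have h3 := hpl γ β α z y x
    simp only [omegaBracket, map_sub, LinearMap.sub_apply, mul_comm] at h1 h2 h3 ⊢
    linear_combination (norm := abel) -h1 - h2 - h3
end

section
/- Let Ω be a semigroup and (A, (*_{α,β})_{α,β∈Ω}) an Ω-zinbiel algebra, i.e., x *_{α,βγ} (y *_{β,γ} z) = (x *_{α,β} y) *_{αβ,γ} z + (y *_{β,α} x) *_{αβ,γ} z for all x,y,z and α,β,γ. Then x *_{α,βγ} (y *_{β,γ} z) = y *_{β,αγ} (x *_{α,γ} z) for all x,y,z∈A and α,β,γ∈Ω. -/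
/-- In an Ω-zinbiel algebra (Ω commutative),
`x *_{α,βγ} (y *_{β,γ} z) = y *_{β,αγ} (x *_{α,γ} z)`. -/
theorem omegaZinbiel_symm
    {k Ω A : Type*} [Field k] [CommSemigroup Ω] [AddCommGroup A] [Module k A]
    (star : Ω → Ω → A →ₗ[k] A →ₗ[k] A)
    (hz : ∀ (α β γ : Ω) (x y z : A),
      star α (β * γ) x (star β γ y z)
        = star (α * β) γ (star α β x y) z + star (α * β) γ (star β α y x) z) :
    ∀ (α β γ : Ω) (x y z : A),
      star α (β * γ) x (star β γ y z) = star β (α * γ) y (star α γ x z) := by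
  intro α β γ x y z
  rw [hz α β γ x y z, hz β α γ y x z, mul_comm β α]
  abel
end

section
/- Let Ω be a semigroup, A an associative algebra, M an A-bimodule, and {T_α: M → A}_{α∈Ω} an O-operator family, i.e., linear maps satisfying T_α(u)T_β(v) = T_{αβ}(T_α(u)·v + u·T_β(v)) where · denotes the bimodule actions. Then the operations u ∗̂_{α,β} v := T_α(u)·v + u·T_β(v) make M into an Ω-associative algebra: (u ∗̂_{α,β} v) ∗̂_{αβ,γ} w = u ∗̂_{α,βγ} (v ∗̂_{β,γ} w) for all u,v,w∈M and α,β,γ∈Ω. -/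
/-- An O-operator family `{T_α}` on an `A`-bimodule `M` makes `M`
an Ω-associative algebra via `u ∗̂_{α,β} v = T_α(u)·v + u·T_β(v)`. -/
theorem oOperatorFamily_omegaAssoc
    {k Ω A M : Type*} [Field k] [Semigroup Ω] [NonUnitalRing A] [Module k A]
    [AddCommGroup M] [Module k M]
    (actL : A →ₗ[k] M →ₗ[k] M) (actR : M →ₗ[k] A →ₗ[k] M)
    (hb1 : ∀ (a b : A) (m : M), actL (a * b) m = actL a (actL b m))
    (hb2 : ∀ (a : A) (m : M) (b : A), actR (actL a m) b = actL a (actR m b))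
    (hb3 : ∀ (m : M) (a b : A), actR (actR m a) b = actR m (a * b))
    (T : Ω → M →ₗ[k] A)
    (hT : ∀ (α β : Ω) (u v : M),
      T α u * T β v = T (α * β) (actL (T α u) v + actR u (T β v))) :
    ∀ (α β γ : Ω) (u v w : M),
      actL (T (α * β) (actL (T α u) v + actR u (T β v))) w
        + actR (actL (T α u) v + actR u (T β v)) (T γ w)
      = actL (T α u) (actL (T β v) w + actR v (T γ w))
        + actR u (T (β * γ) (actL (T β v) w + actR v (T γ w))) := by
  intro α β γ u v w
  rw [← hT, ← hT, hb1]
  simp only [map_add, LinearMap.add_apply, hb2, hb3]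
  abel
end

section
/- Let Ω be a semigroup, A an associative algebra, M an A-bimodule, and {T_α: M→A}_{α∈Ω} a family of linear maps. Equip A⊗k[Ω] with the associative product (a⊗α)(b⊗β) = ab⊗αβ and M⊗k[Ω] with the A⊗k[Ω]-bimodule structure (a⊗α)·(u⊗β) = (a·u)⊗αβ, (u⊗β)·(a⊗α) = (u·a)⊗βα. Then {T_α} is an O-operator family (i.e., T_α(u)T_β(v) = T_{αβ}(T_α(u)·v + u·T_β(v)) for all u,v,α,β) if and only if the single linear map T: M⊗k[Ω]→A⊗k[Ω], u⊗α ↦ T_α(u)⊗α, is an O-operator, i.e., T(x)T(y) = T(T(x)·y + x·T(y)) for all x,y∈M⊗k[Ω]. -/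
/-!
Both sides of the O-operator identity for `T` are bilinear in `(x, y)`, and `M ⊗ k[Ω]` is
spanned by the tensors `u ⊗ α`. On two such generators the identity for `T` is the identity of
the family tensored with `αβ`, and `a ↦ a ⊗ αβ` is injective.
-/

open TensorProduct

section TensorMonoidAlgebra

variable {k Ω M N : Type*} [CommSemiring k] [AddCommMonoid M] [Module k M]
  [AddCommMonoid N] [Module k N]

theorem tmul_single_one_injective (γ : Ω) :
    Function.Injective fun u : M => u ⊗ₜ[k] MonoidAlgebra.single γ (1 : k) := by
  intro u v huv
  -- read off the coefficient at `γ`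
  have := congrArg (TensorProduct.rid k M ∘ LinearMap.lTensor M
    (Finsupp.lapply γ ∘ₗ (MonoidAlgebra.coeffLinearEquiv k).toLinearMap)) huv
  simpa using this

theorem lhom_ext_tmul_single_one {f g : M ⊗[k] MonoidAlgebra k Ω →ₗ[k] N}
    (h : ∀ (u : M) (α : Ω),
      f (u ⊗ₜ MonoidAlgebra.single α 1) = g (u ⊗ₜ MonoidAlgebra.single α 1)) :
    f = g := by
  refine TensorProduct.ext' fun u p => ?_
  induction p using MonoidAlgebra.induction_linear with
  | zero => simp only [tmul_zero, map_zero]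
  | add p q hp hq => simp only [tmul_add, map_add, hp, hq]
  | single α r =>
    rw [← mul_one r, ← MonoidAlgebra.smul_single', tmul_smul, map_smul, map_smul, h]

theorem bilin_ext_tmul_single_one
    {f g : M ⊗[k] MonoidAlgebra k Ω →ₗ[k] M ⊗[k] MonoidAlgebra k Ω →ₗ[k] N}
    (h : ∀ (u : M) (α : Ω) (v : M) (β : Ω),
      f (u ⊗ₜ MonoidAlgebra.single α 1) (v ⊗ₜ MonoidAlgebra.single β 1) =
        g (u ⊗ₜ MonoidAlgebra.single α 1) (v ⊗ₜ MonoidAlgebra.single β 1)) :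
    f = g :=
  lhom_ext_tmul_single_one fun u α => lhom_ext_tmul_single_one (h u α)

end TensorMonoidAlgebra

theorem oOperatorFamily_iff_oOperator_general
    {k Ω A M : Type*} [Field k] [Semigroup Ω] [NonUnitalRing A] [Module k A]
    [AddCommGroup M] [Module k M]
    (actL : A →ₗ[k] M →ₗ[k] M) (actR : M →ₗ[k] A →ₗ[k] M)
    (T : Ω → M →ₗ[k] A)
    -- the associative product on `A ⊗ k[Ω]`
    (mulB : TensorProduct k A (MonoidAlgebra k Ω) →ₗ[k]
      TensorProduct k A (MonoidAlgebra k Ω) →ₗ[k] TensorProduct k A (MonoidAlgebra k Ω))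
    (hmulB : ∀ (a b : A) (α β : Ω),
      mulB (a ⊗ₜ[k] MonoidAlgebra.single α 1) (b ⊗ₜ[k] MonoidAlgebra.single β 1)
        = (a * b) ⊗ₜ[k] MonoidAlgebra.single (α * β) 1)
    -- the bimodule actions on `M ⊗ k[Ω]`
    (actLB : TensorProduct k A (MonoidAlgebra k Ω) →ₗ[k]
      TensorProduct k M (MonoidAlgebra k Ω) →ₗ[k] TensorProduct k M (MonoidAlgebra k Ω))
    (hactLB : ∀ (a : A) (u : M) (α β : Ω),
      actLB (a ⊗ₜ[k] MonoidAlgebra.single α 1) (u ⊗ₜ[k] MonoidAlgebra.single β 1)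
        = (actL a u) ⊗ₜ[k] MonoidAlgebra.single (α * β) 1)
    (actRB : TensorProduct k M (MonoidAlgebra k Ω) →ₗ[k]
      TensorProduct k A (MonoidAlgebra k Ω) →ₗ[k] TensorProduct k M (MonoidAlgebra k Ω))
    (hactRB : ∀ (u : M) (a : A) (β α : Ω),
      actRB (u ⊗ₜ[k] MonoidAlgebra.single β 1) (a ⊗ₜ[k] MonoidAlgebra.single α 1)
        = (actR u a) ⊗ₜ[k] MonoidAlgebra.single (β * α) 1)
    -- the assembled map `T : M⊗k[Ω] → A⊗k[Ω]`
    (That : TensorProduct k M (MonoidAlgebra k Ω) →ₗ[k]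
      TensorProduct k A (MonoidAlgebra k Ω))
    (hThat : ∀ (u : M) (α : Ω),
      That (u ⊗ₜ[k] MonoidAlgebra.single α 1) = (T α u) ⊗ₜ[k] MonoidAlgebra.single α 1) :
    (∀ (α β : Ω) (u v : M),
      T α u * T β v = T (α * β) (actL (T α u) v + actR u (T β v)))
      ↔ (∀ x y : TensorProduct k M (MonoidAlgebra k Ω),
        mulB (That x) (That y) = That (actLB (That x) y + actRB x (That y))) := by
  have on_generators : ∀ (α β : Ω) (u v : M),
      let x := u ⊗ₜ[k] MonoidAlgebra.single α (1 : k)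
      let y := v ⊗ₜ[k] MonoidAlgebra.single β (1 : k)
      mulB (That x) (That y) = That (actLB (That x) y + actRB x (That y)) ↔
        T α u * T β v = T (α * β) (actL (T α u) v + actR u (T β v)) := by
    intro α β u v
    dsimp only
    rw [hThat, hThat, hmulB, hactLB, hactRB, ← add_tmul, hThat]
    exact (tmul_single_one_injective _).eq_iff
  constructor
  · intro h
    have hbilin :
        mulB.compl₁₂ That That = (actLB ∘ₗ That + actRB.compl₂ That).compr₂ That :=
      bilin_ext_tmul_single_one fun u α v β => (on_generators α β u v).2 (h α β u v)
    exact fun x y => LinearMap.congr_fun₂ hbilin x y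
  · exact fun h α β u v => (on_generators α β u v).1 (h _ _)

/-- `{T_α}` is an O-operator family iff
`T : M⊗k[Ω] → A⊗k[Ω], u⊗α ↦ T_α(u)⊗α` is an O-operator for the induced
algebra and bimodule structures on `A⊗k[Ω]` and `M⊗k[Ω]`. -/
theorem oOperatorFamily_iff_oOperator
    {k Ω A M : Type*} [Field k] [Semigroup Ω] [NonUnitalRing A] [Module k A]
    [AddCommGroup M] [Module k M]
    (actL : A →ₗ[k] M →ₗ[k] M) (actR : M →ₗ[k] A →ₗ[k] M)
    (hb1 : ∀ (a b : A) (m : M), actL (a * b) m = actL a (actL b m))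
    (hb2 : ∀ (a : A) (m : M) (b : A), actR (actL a m) b = actL a (actR m b))
    (hb3 : ∀ (m : M) (a b : A), actR (actR m a) b = actR m (a * b))
    (T : Ω → M →ₗ[k] A)
    -- the associative product on `A ⊗ k[Ω]`
    (mulB : TensorProduct k A (MonoidAlgebra k Ω) →ₗ[k]
      TensorProduct k A (MonoidAlgebra k Ω) →ₗ[k] TensorProduct k A (MonoidAlgebra k Ω))
    (hmulB : ∀ (a b : A) (α β : Ω),
      mulB (a ⊗ₜ[k] MonoidAlgebra.single α 1) (b ⊗ₜ[k] MonoidAlgebra.single β 1)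
        = (a * b) ⊗ₜ[k] MonoidAlgebra.single (α * β) 1)
    -- the bimodule actions on `M ⊗ k[Ω]`
    (actLB : TensorProduct k A (MonoidAlgebra k Ω) →ₗ[k]
      TensorProduct k M (MonoidAlgebra k Ω) →ₗ[k] TensorProduct k M (MonoidAlgebra k Ω))
    (hactLB : ∀ (a : A) (u : M) (α β : Ω),
      actLB (a ⊗ₜ[k] MonoidAlgebra.single α 1) (u ⊗ₜ[k] MonoidAlgebra.single β 1)
        = (actL a u) ⊗ₜ[k] MonoidAlgebra.single (α * β) 1)
    (actRB : TensorProduct k M (MonoidAlgebra k Ω) →ₗ[k]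
      TensorProduct k A (MonoidAlgebra k Ω) →ₗ[k] TensorProduct k M (MonoidAlgebra k Ω))
    (hactRB : ∀ (u : M) (a : A) (β α : Ω),
      actRB (u ⊗ₜ[k] MonoidAlgebra.single β 1) (a ⊗ₜ[k] MonoidAlgebra.single α 1)
        = (actR u a) ⊗ₜ[k] MonoidAlgebra.single (β * α) 1)
    -- the assembled map `T : M⊗k[Ω] → A⊗k[Ω]`
    (That : TensorProduct k M (MonoidAlgebra k Ω) →ₗ[k]
      TensorProduct k A (MonoidAlgebra k Ω))
    (hThat : ∀ (u : M) (α : Ω),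
      That (u ⊗ₜ[k] MonoidAlgebra.single α 1) = (T α u) ⊗ₜ[k] MonoidAlgebra.single α 1) :
    (∀ (α β : Ω) (u v : M),
      T α u * T β v = T (α * β) (actL (T α u) v + actR u (T β v)))
      ↔ (∀ x y : TensorProduct k M (MonoidAlgebra k Ω),
        mulB (That x) (That y) = That (actLB (That x) y + actRB x (That y))) :=
  oOperatorFamily_iff_oOperator_general actL actR T mulB hmulB actLB hactLB actRB hactRB That hThat
end

section
/- Let Ω be a commutative semigroup, (A, (*_{α,β})) a commutative Ω-associative algebra, and φ = (φ_{α,β})_{α,β∈Ω} a family of bilinear maps A×A→A that is skew-commutative (φ_{α,β}(x,y) = −φ_{β,α}(y,x)) and is a 2-cocycle, meaning φ_{α,βγ}(x, y *_{β,γ} z) = φ_{αβ,γ}(x *_{α,β} y, z) − x *_{α,βγ} φ_{β,γ}(y,z) + φ_{α,β}(x,y) *_{αβ,γ} z for all x,y,z and α,β,γ. Then φ satisfies the derivation property: φ_{α,βγ}(x, y *_{β,γ} z) = φ_{α,β}(x,y) *_{αβ,γ} z + y *_{β,αγ} φ_{α,γ}(x,z). -/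
/-- A skew-commutative 2-cocycle on a commutative Ω-associative
algebra satisfies the derivation property. -/
theorem skew_cocycle_derivation
    {k Ω A : Type*} [Field k] [CharZero k] [CommSemigroup Ω]
    [AddCommGroup A] [Module k A]
    (star : Ω → Ω → A →ₗ[k] A →ₗ[k] A)
    (hassoc : ∀ (α β γ : Ω) (x y z : A),
      star (α * β) γ (star α β x y) z = star α (β * γ) x (star β γ y z))
    (hcomm : ∀ (α β : Ω) (x y : A), star α β x y = star β α y x)
    (φ : Ω → Ω → A →ₗ[k] A →ₗ[k] A)
    (hskew : ∀ (α β : Ω) (x y : A), φ α β x y = -φ β α y x)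
    (hcocycle : ∀ (α β γ : Ω) (x y z : A),
      φ α (β * γ) x (star β γ y z)
        = φ (α * β) γ (star α β x y) z - star α (β * γ) x (φ β γ y z)
          + star (α * β) γ (φ α β x y) z) :
    ∀ (α β γ : Ω) (x y z : A),
      φ α (β * γ) x (star β γ y z)
        = star (α * β) γ (φ α β x y) z + star β (α * γ) y (φ α γ x z) := by
  intro α β γ x y z
  have h1 := hcocycle α β γ x y z
  have h2 := hcocycle β α γ y x z
  have h3 := hcocycle β γ α y z x
  rw [mul_comm β α, hcomm β α y x, hskew β α y x] at h2
  rw [mul_comm γ α, hcomm γ α z x, hskew (β * γ) α (star β γ y z) x,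
    hskew γ α z x, hcomm (β * γ) α (φ β γ y z) x] at h3
  simp only [map_neg, LinearMap.neg_apply] at h2 h3
  have key : (2 : k) • (φ α (β * γ) x (star β γ y z))
      = (2 : k) • (star (α * β) γ (φ α β x y) z + star β (α * γ) y (φ α γ x z)) := by
    rw [two_smul, two_smul, h1]
    rw [h2, h1] at h3
    linear_combination (norm := module) h3
  exact smul_right_injective A (two_ne_zero) key
end

section
/- Let Ω be a semigroup with unit, A an Ω-associative algebra over a field of characteristic zero, and suppose the second cohomology group H²_Ω(A,A) of the Ω-Hochschild complex vanishes. Then A is rigid: every formal deformation 𝔗ᵗ_{α,β} = Σᵢ T⁽ⁱ⁾_{α,β} tⁱ of A (with T⁽⁰⁾_{α,β} = *_{α,β} and satisfying 𝔗ᵗ_{α,βγ}(x, 𝔗ᵗ_{β,γ}(y,z)) = 𝔗ᵗ_{αβ,γ}(𝔗ᵗ_{α,β}(x,y), z)) is equivalent to the trivial deformation 𝔗̃ᵗ_{α,β} = T⁽⁰⁾_{α,β}. -/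
open Finset

/-! ### Sum manipulation helpers -/

private lemma padSum {M : Type*} [AddCommMonoid M] (N : ℕ) (m : ℕ) (hm : m ≤ N) (g : ℕ → M) :
    ∑ j ∈ range (m+1), g j = ∑ j ∈ range (N+1), if j ≤ m then g j else 0 := by
  have h := Finset.sum_subset (f := fun j => if j ≤ m then g j else 0)
    (Finset.range_subset_range.mpr (by omega : m + 1 ≤ N + 1))
    (fun x hx hnx => by
      simp only [mem_range, Nat.lt_succ_iff] at hx hnx
      exact if_neg (by omega))
  rw [← h]
  exact Finset.sum_congr rfl fun x hx => by
    simp only [mem_range, Nat.lt_succ_iff] at hx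
    simp [hx]

private lemma swapTri {M : Type*} [AddCommMonoid M] (N : ℕ) (f : ℕ → ℕ → M) :
    ∑ i ∈ range (N+1), ∑ j ∈ range (N-i+1), f i j
      = ∑ j ∈ range (N+1), ∑ i ∈ range (N-j+1), f i j := by
  have h1 : ∀ i ∈ range (N+1), ∑ j ∈ range (N-i+1), f i j
      = ∑ j ∈ range (N+1), if j ≤ N - i then f i j else 0 :=
    fun i hi => padSum N (N-i) (by omega) _
  rw [Finset.sum_congr rfl h1, Finset.sum_comm]
  refine Finset.sum_congr rfl fun j hj => ?_
  rw [padSum N (N-j) (by omega) (fun i => f i j)]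
  refine Finset.sum_congr rfl fun i hi => ?_
  simp only [Nat.lt_succ_iff, mem_range] at hi hj
  by_cases h : i + j ≤ N
  · rw [if_pos (by omega), if_pos (by omega)]
  · rw [if_neg (by omega), if_neg (by omega)]

/-- regrouping a sum over `{(i,j,k) : i+j+k = N}` by first vs third index -/
private lemma triShift {M : Type*} [AddCommMonoid M] (N : ℕ) (G : ℕ → ℕ → ℕ → M) :
    ∑ p ∈ range (N+1), ∑ j ∈ range (N-p+1), G p j (N-p-j)
      = ∑ q ∈ range (N+1), ∑ a ∈ range (N-q+1), G a (N-q-a) q := by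
  rw [swapTri N (fun p j => G p j (N-p-j))]
  have h2 : ∀ j ∈ range (N+1), ∑ p ∈ range (N-j+1), G p j (N-p-j)
      = ∑ p ∈ range (N-j+1), G (N-j-p) j p := by
    intro j hj
    simp only [mem_range, Nat.lt_succ_iff] at hj
    rw [← Finset.sum_range_reflect (fun p => G (N-j-p) j p) (N-j+1)]
    refine Finset.sum_congr rfl fun p hp => ?_
    simp only [mem_range, Nat.lt_succ_iff] at hp
    congr 1 <;> omega
  rw [Finset.sum_congr rfl h2, swapTri N (fun j p => G (N-j-p) j p)]
  refine Finset.sum_congr rfl fun q hq => ?_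
  simp only [mem_range, Nat.lt_succ_iff] at hq
  rw [← Finset.sum_range_reflect (fun a => G a (N-q-a) q) (N-q+1)]
  refine Finset.sum_congr rfl fun j hj => ?_
  simp only [mem_range, Nat.lt_succ_iff] at hj
  congr 1 <;> omega

/-- peel the `i = 0` term of an outer sum, with a correction term. -/
private lemma sum_peel0 {M : Type*} [AddCommGroup M] (n : ℕ) (f g : ℕ → M) (c : M)
    (hmid : ∀ i, 0 < i → i ≤ n → f i = g i) (h0 : f 0 = g 0 - c) :
    ∑ i ∈ range (n+1), f i = (∑ i ∈ range (n+1), g i) - c := by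
  rw [Finset.sum_range_succ' f n, Finset.sum_range_succ' g n, h0]
  have h : ∑ i ∈ range n, f (i+1) = ∑ i ∈ range n, g (i+1) :=
    Finset.sum_congr rfl fun i hi => by
      simp only [mem_range] at hi
      exact hmid _ (by omega) (by omega)
  rw [h]; abel

section OmegaRigid

variable {k Ω A : Type*} [Field k] [Monoid Ω] [AddCommGroup A] [Module k A]

/-- The degree-`n` obstruction for the equivalence with the trivial deformation. -/
private def rigidG (star : Ω → Ω → A →ₗ[k] A →ₗ[k] A)
    (T : ℕ → Ω → Ω → A →ₗ[k] A →ₗ[k] A)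
    (n : ℕ) (Φ : ℕ → Ω → A →ₗ[k] A) (a b : Ω) (u v : A) : A :=
  (∑ j ∈ range (n+1), star a b (Φ j a u) (Φ (n-j) b v))
    - ∑ i ∈ range (n+1), Φ i (a*b) (T (n-i) a b u v)

private lemma rigidG_sub (star : Ω → Ω → A →ₗ[k] A →ₗ[k] A)
    (T : ℕ → Ω → Ω → A →ₗ[k] A →ₗ[k] A)
    (n : ℕ) (Φ : ℕ → Ω → A →ₗ[k] A) (a b : Ω) (u v : A) :
    (∑ i ∈ range (n+1), Φ i (a*b) (T (n-i) a b u v))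
      = (∑ j ∈ range (n+1), star a b (Φ j a u) (Φ (n-j) b v))
        - rigidG star T n Φ a b u v := by
  rw [rigidG]; abel

end OmegaRigid

section Coc
open Finset
variable {k Ω A : Type*} [Field k] [Monoid Ω] [AddCommGroup A] [Module k A]

private lemma rigidG_cocycle (star : Ω → Ω → A →ₗ[k] A →ₗ[k] A)
    (T : ℕ → Ω → Ω → A →ₗ[k] A →ₗ[k] A)
    (hassoc : ∀ (α β γ : Ω) (x y z : A),
      star (α * β) γ (star α β x y) z = star α (β * γ) x (star β γ y z))
    (hT0 : ∀ (α β : Ω) (x y : A), T 0 α β x y = star α β x y)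
    (h2 : ∀ (s : ℕ) (α β γ : Ω) (x y z : A),
        ∑ i ∈ range (s + 1), T i α (β * γ) x (T (s - i) β γ y z)
          = ∑ i ∈ range (s + 1), T i (α * β) γ (T (s - i) α β x y) z)
    (n : ℕ) (hn : 0 < n) (Φ : ℕ → Ω → A →ₗ[k] A)
    (hΦ0 : ∀ ω, Φ 0 ω = LinearMap.id)
    (hE : ∀ r < n, ∀ (a b : Ω) (u v : A),
      ∑ i ∈ range (r+1), Φ i (a*b) (T (r-i) a b u v)
        = ∑ j ∈ range (r+1), star a b (Φ j a u) (Φ (r-j) b v))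
    (α β γ : Ω) (x y z : A) :
    star α (β*γ) x (rigidG star T n Φ β γ y z)
      - star (α*β) γ (rigidG star T n Φ α β x y) z
      - rigidG star T n Φ (α*β) γ (star α β x y) z
      + rigidG star T n Φ α (β*γ) x (star β γ y z) = 0 := by
  -- the two triple sums
  -- L-chain -------------------------------------------------------------
  have stepL2 :
      (∑ kk ∈ range (n+1), ∑ i ∈ range (n-kk+1),
          Φ i (α*(β*γ)) (T (n-kk-i) α (β*γ) x (T kk β γ y z)))
      = (∑ kk ∈ range (n+1), ∑ p ∈ range (n-kk+1),
          star α (β*γ) (Φ p α x) (Φ (n-kk-p) (β*γ) (T kk β γ y z)))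
        - rigidG star T n Φ α (β*γ) x (star β γ y z) := by
    refine sum_peel0 n _ _ _ (fun kk hk1 hk2 => ?_) ?_
    · exact hE (n-kk) (by omega) α (β*γ) x (T kk β γ y z)
    · simp only [Nat.sub_zero, hT0]
      exact rigidG_sub star T n Φ α (β*γ) x (star β γ y z)
  have stepL3 :
      (∑ kk ∈ range (n+1), ∑ p ∈ range (n-kk+1),
          star α (β*γ) (Φ p α x) (Φ (n-kk-p) (β*γ) (T kk β γ y z)))
      = ∑ p ∈ range (n+1), ∑ kk ∈ range (n-p+1),
          star α (β*γ) (Φ p α x) (Φ (n-p-kk) (β*γ) (T kk β γ y z)) := by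
    rw [swapTri n (fun kk p => star α (β*γ) (Φ p α x) (Φ (n-kk-p) (β*γ) (T kk β γ y z)))]
    refine Finset.sum_congr rfl fun p hp => Finset.sum_congr rfl fun kk hkk => ?_
    rw [show n-kk-p = n-p-kk from by omega]
  have stepL4 :
      (∑ p ∈ range (n+1), ∑ kk ∈ range (n-p+1),
          star α (β*γ) (Φ p α x) (Φ (n-p-kk) (β*γ) (T kk β γ y z)))
      = (∑ p ∈ range (n+1), ∑ j ∈ range (n-p+1),
          star α (β*γ) (Φ p α x) (star β γ (Φ j β y) (Φ (n-p-j) γ z)))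
        - star α (β*γ) x (rigidG star T n Φ β γ y z) := by
    have key : ∀ p ≤ n, (∑ kk ∈ range (n-p+1), Φ (n-p-kk) (β*γ) (T kk β γ y z))
        = ∑ i ∈ range (n-p+1), Φ i (β*γ) (T (n-p-i) β γ y z) := by
      intro p hp
      rw [← Finset.sum_range_reflect (fun i => Φ i (β*γ) (T (n-p-i) β γ y z)) (n-p+1)]
      refine Finset.sum_congr rfl fun kk hkk => ?_
      simp only [mem_range, Nat.lt_succ_iff] at hkk
      rw [show n-p+1-1-kk = n-p-kk from by omega]
      rw [show n-p-(n-p-kk) = kk from by omega]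
    have key0 : (∑ kk ∈ range (n+1), Φ (n-kk) (β*γ) (T kk β γ y z))
        = ∑ i ∈ range (n+1), Φ i (β*γ) (T (n-i) β γ y z) := by
      rw [← Finset.sum_range_reflect (fun i => Φ i (β*γ) (T (n-i) β γ y z)) (n+1)]
      refine Finset.sum_congr rfl fun kk hkk => ?_
      simp only [mem_range, Nat.lt_succ_iff] at hkk
      rw [show n+1-1-kk = n-kk from by omega]
      rw [show n-(n-kk) = kk from by omega]
    refine sum_peel0 n _ _ _ (fun p hp1 hp2 => ?_) ?_
    · rw [← map_sum, ← map_sum, key p hp2, hE (n-p) (by omega) β γ y z]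
    · rw [← map_sum, ← map_sum]
      simp only [Nat.sub_zero]
      rw [key0, rigidG_sub star T n Φ β γ y z, map_sub]
      simp [hΦ0]
  -- R-chain -------------------------------------------------------------
  have stepR2 :
      (∑ kk ∈ range (n+1), ∑ i ∈ range (n-kk+1),
          Φ i (α*β*γ) (T (n-kk-i) (α*β) γ (T kk α β x y) z))
      = (∑ kk ∈ range (n+1), ∑ p ∈ range (n-kk+1),
          star (α*β) γ (Φ p (α*β) (T kk α β x y)) (Φ (n-kk-p) γ z))
        - rigidG star T n Φ (α*β) γ (star α β x y) z := by
    refine sum_peel0 n _ _ _ (fun kk hk1 hk2 => ?_) ?_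
    · exact hE (n-kk) (by omega) (α*β) γ (T kk α β x y) z
    · simp only [Nat.sub_zero, hT0]
      exact rigidG_sub star T n Φ (α*β) γ (star α β x y) z
  have stepR3 :
      (∑ kk ∈ range (n+1), ∑ p ∈ range (n-kk+1),
          star (α*β) γ (Φ p (α*β) (T kk α β x y)) (Φ (n-kk-p) γ z))
      = ∑ kk ∈ range (n+1), ∑ q ∈ range (n-kk+1),
          star (α*β) γ (Φ (n-kk-q) (α*β) (T kk α β x y)) (Φ q γ z) := by
    refine Finset.sum_congr rfl fun kk hkk => ?_
    rw [← Finset.sum_range_reflect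
      (fun q => star (α*β) γ (Φ (n-kk-q) (α*β) (T kk α β x y)) (Φ q γ z)) (n-kk+1)]
    refine Finset.sum_congr rfl fun p hp => ?_
    simp only [mem_range, Nat.lt_succ_iff] at hp
    rw [show n-kk-(n-kk+1-1-p) = p from by omega]
    rw [show n-kk+1-1-p = n-kk-p from by omega]
  have stepR4 :
      (∑ kk ∈ range (n+1), ∑ q ∈ range (n-kk+1),
          star (α*β) γ (Φ (n-kk-q) (α*β) (T kk α β x y)) (Φ q γ z))
      = ∑ q ∈ range (n+1), ∑ kk ∈ range (n-q+1),
          star (α*β) γ (Φ (n-q-kk) (α*β) (T kk α β x y)) (Φ q γ z) := by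
    rw [swapTri n (fun kk q => star (α*β) γ (Φ (n-kk-q) (α*β) (T kk α β x y)) (Φ q γ z))]
    refine Finset.sum_congr rfl fun q hq => Finset.sum_congr rfl fun kk hkk => ?_
    rw [show n-kk-q = n-q-kk from by omega]
  have stepR5 :
      (∑ q ∈ range (n+1), ∑ kk ∈ range (n-q+1),
          star (α*β) γ (Φ (n-q-kk) (α*β) (T kk α β x y)) (Φ q γ z))
      = (∑ q ∈ range (n+1), ∑ a ∈ range (n-q+1),
          star (α*β) γ (star α β (Φ a α x) (Φ (n-q-a) β y)) (Φ q γ z))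
        - star (α*β) γ (rigidG star T n Φ α β x y) z := by
    have key : ∀ q ≤ n, (∑ kk ∈ range (n-q+1), Φ (n-q-kk) (α*β) (T kk α β x y))
        = ∑ i ∈ range (n-q+1), Φ i (α*β) (T (n-q-i) α β x y) := by
      intro q hq
      rw [← Finset.sum_range_reflect (fun i => Φ i (α*β) (T (n-q-i) α β x y)) (n-q+1)]
      refine Finset.sum_congr rfl fun kk hkk => ?_
      simp only [mem_range, Nat.lt_succ_iff] at hkk
      rw [show n-q+1-1-kk = n-q-kk from by omega]
      rw [show n-q-(n-q-kk) = kk from by omega]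
    have pull : ∀ (m : ℕ) (v : ℕ → A) (w : A),
        ∑ kk ∈ range m, star (α*β) γ (v kk) w
          = star (α*β) γ (∑ kk ∈ range m, v kk) w := by
      intro m v w
      rw [map_sum, LinearMap.sum_apply]
    have key0 : (∑ kk ∈ range (n+1), Φ (n-kk) (α*β) (T kk α β x y))
        = ∑ i ∈ range (n+1), Φ i (α*β) (T (n-i) α β x y) := by
      rw [← Finset.sum_range_reflect (fun i => Φ i (α*β) (T (n-i) α β x y)) (n+1)]
      refine Finset.sum_congr rfl fun kk hkk => ?_
      simp only [mem_range, Nat.lt_succ_iff] at hkk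
      rw [show n+1-1-kk = n-kk from by omega]
      rw [show n-(n-kk) = kk from by omega]
    refine sum_peel0 n _ _ _ (fun q hq1 hq2 => ?_) ?_
    · rw [pull, pull, key q hq2, hE (n-q) (by omega) α β x y]
    · rw [pull, pull]
      simp only [Nat.sub_zero]
      rw [key0, rigidG_sub star T n Φ α β x y, map_sub,
        LinearMap.sub_apply]
      simp [hΦ0]
  -- triple star sums agree ----------------------------------------------
  have stepTS :
      (∑ p ∈ range (n+1), ∑ j ∈ range (n-p+1),
          star α (β*γ) (Φ p α x) (star β γ (Φ j β y) (Φ (n-p-j) γ z)))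
      = ∑ q ∈ range (n+1), ∑ a ∈ range (n-q+1),
          star (α*β) γ (star α β (Φ a α x) (Φ (n-q-a) β y)) (Φ q γ z) := by
    have h1 : ∀ p ∈ range (n+1), ∀ j ∈ range (n-p+1),
        star α (β*γ) (Φ p α x) (star β γ (Φ j β y) (Φ (n-p-j) γ z))
          = star (α*β) γ (star α β (Φ p α x) (Φ j β y)) (Φ (n-p-j) γ z) :=
      fun p _ j _ => (hassoc α β γ (Φ p α x) (Φ j β y) (Φ (n-p-j) γ z)).symm
    rw [Finset.sum_congr rfl fun p hp => Finset.sum_congr rfl (h1 p hp)]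
    exact triShift n (fun p j q => star (α*β) γ (star α β (Φ p α x) (Φ j β y)) (Φ q γ z))
  -- the two expansions of the same triple sum ----------------------------
  have stepLR :
      (∑ kk ∈ range (n+1), ∑ i ∈ range (n-kk+1),
          Φ i (α*(β*γ)) (T (n-kk-i) α (β*γ) x (T kk β γ y z)))
      = ∑ kk ∈ range (n+1), ∑ i ∈ range (n-kk+1),
          Φ i (α*β*γ) (T (n-kk-i) (α*β) γ (T kk α β x y) z) := by
    rw [swapTri n (fun kk i => Φ i (α*(β*γ)) (T (n-kk-i) α (β*γ) x (T kk β γ y z))),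
      swapTri n (fun kk i => Φ i (α*β*γ) (T (n-kk-i) (α*β) γ (T kk α β x y) z))]
    refine Finset.sum_congr rfl fun i hi => ?_
    simp only [mem_range, Nat.lt_succ_iff] at hi
    rw [← map_sum, ← map_sum, mul_assoc]
    congr 1
    have eL : (∑ kk ∈ range (n-i+1), T (n-kk-i) α (β*γ) x (T kk β γ y z))
        = ∑ j ∈ range (n-i+1), T j α (β*γ) x (T (n-i-j) β γ y z) := by
      rw [← Finset.sum_range_reflect (fun j => T j α (β*γ) x (T (n-i-j) β γ y z)) (n-i+1)]
      refine Finset.sum_congr rfl fun kk hkk => ?_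
      simp only [mem_range, Nat.lt_succ_iff] at hkk
      rw [show n-i+1-1-kk = n-kk-i from by omega]
      rw [show n-i-(n-kk-i) = kk from by omega]
    have eR : (∑ kk ∈ range (n-i+1), T (n-kk-i) (α*β) γ (T kk α β x y) z)
        = ∑ j ∈ range (n-i+1), T j (α*β) γ (T (n-i-j) α β x y) z := by
      rw [← Finset.sum_range_reflect (fun j => T j (α*β) γ (T (n-i-j) α β x y) z) (n-i+1)]
      refine Finset.sum_congr rfl fun kk hkk => ?_
      simp only [mem_range, Nat.lt_succ_iff] at hkk
      rw [show n-i+1-1-kk = n-kk-i from by omega]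
      rw [show n-i-(n-kk-i) = kk from by omega]
    rw [eL, eR, h2 (n-i) α β γ x y z]
  -- assemble --------------------------------------------------------------
  have final := stepLR
  rw [stepL2, stepL3, stepL4, stepR2, stepR3, stepR4, stepR5, stepTS] at final
  have key : star α (β*γ) x (rigidG star T n Φ β γ y z)
        + rigidG star T n Φ α (β*γ) x (star β γ y z)
      = star (α*β) γ (rigidG star T n Φ α β x y) z
        + rigidG star T n Φ (α*β) γ (star α β x y) z := by
    have h := final
    rw [sub_sub, sub_sub, sub_right_inj] at h
    exact h
  rw [show star α (β*γ) x (rigidG star T n Φ β γ y z)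
      - star (α*β) γ (rigidG star T n Φ α β x y) z
      - rigidG star T n Φ (α*β) γ (star α β x y) z
      + rigidG star T n Φ α (β*γ) x (star β γ y z)
    = (star α (β*γ) x (rigidG star T n Φ β γ y z)
        + rigidG star T n Φ α (β*γ) x (star β γ y z))
      - (star (α*β) γ (rigidG star T n Φ α β x y) z
        + rigidG star T n Φ (α*β) γ (star α β x y) z) from by abel, key, sub_self]

end Coc

section Rest
open Finset
variable {k Ω A : Type*} [Field k] [Monoid Ω] [AddCommGroup A] [Module k A]

private def rigidKeyEx (star : Ω → Ω → A →ₗ[k] A →ₗ[k] A)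
    (T : ℕ → Ω → Ω → A →ₗ[k] A →ₗ[k] A)
    (n : ℕ) (Φ : ℕ → Ω → A →ₗ[k] A) : Prop :=
  ∃ φ : Ω → A →ₗ[k] A, ∀ (α β : Ω) (x y : A),
    (∑ j ∈ range (n+1), star α β (Φ j α x) (Φ (n-j) β y))
      - ∑ i ∈ range (n+1), Φ i (α*β) (T (n-i) α β x y)
    = φ (α*β) (star α β x y) - star α β x (φ β y) - star α β (φ α x) y

private lemma rigidKeyEx_of (star : Ω → Ω → A →ₗ[k] A →ₗ[k] A)
    (T : ℕ → Ω → Ω → A →ₗ[k] A →ₗ[k] A)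
    (hassoc : ∀ (α β γ : Ω) (x y z : A),
      star (α * β) γ (star α β x y) z = star α (β * γ) x (star β γ y z))
    (hT0 : ∀ (α β : Ω) (x y : A), T 0 α β x y = star α β x y)
    (h2 : ∀ (s : ℕ) (α β γ : Ω) (x y z : A),
        ∑ i ∈ range (s + 1), T i α (β * γ) x (T (s - i) β γ y z)
          = ∑ i ∈ range (s + 1), T i (α * β) γ (T (s - i) α β x y) z)
    (hH2 : ∀ g : Ω → Ω → A →ₗ[k] A →ₗ[k] A,
      (∀ (α β γ : Ω) (x y z : A),
        star α (β * γ) x (g β γ y z) - star (α * β) γ (g α β x y) z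
          - g (α * β) γ (star α β x y) z + g α (β * γ) x (star β γ y z) = 0) →
      ∃ h : Ω → A →ₗ[k] A, ∀ (α β : Ω) (x y : A),
        g α β x y = star α β x (h β y) - h (α * β) (star α β x y)
          + star α β (h α x) y)
    (n : ℕ) (hn : 0 < n) (Φ : ℕ → Ω → A →ₗ[k] A)
    (hΦ0 : ∀ ω, Φ 0 ω = LinearMap.id)
    (hE : ∀ r < n, ∀ (a b : Ω) (u v : A),
      ∑ i ∈ range (r+1), Φ i (a*b) (T (r-i) a b u v)
        = ∑ j ∈ range (r+1), star a b (Φ j a u) (Φ (r-j) b v)) :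
    rigidKeyEx star T n Φ := by
  have gLapp : ∀ (a b : Ω) (u v : A),
      ((∑ j ∈ range (n+1), (star a b).compl₁₂ (Φ j a) (Φ (n-j) b))
        - ∑ i ∈ range (n+1), LinearMap.compr₂ (T (n-i) a b) (Φ i (a*b))) u v
      = rigidG star T n Φ a b u v := by
    intro a b u v
    simp [rigidG, LinearMap.sub_apply, LinearMap.sum_apply,
      LinearMap.compl₁₂_apply, LinearMap.compr₂_apply]
  obtain ⟨h, hh⟩ := hH2 (fun a b =>
      (∑ j ∈ range (n+1), (star a b).compl₁₂ (Φ j a) (Φ (n-j) b))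
        - ∑ i ∈ range (n+1), LinearMap.compr₂ (T (n-i) a b) (Φ i (a*b)))
    (by
      intro a b c u v w
      simp only [gLapp]
      exact rigidG_cocycle star T hassoc hT0 h2 n hn Φ hΦ0 hE a b c u v w)
  refine ⟨fun ω => -(h ω), fun a b u v => ?_⟩
  have hv := hh a b u v
  rw [gLapp] at hv
  have : (∑ j ∈ range (n+1), star a b (Φ j a u) (Φ (n-j) b v))
      - (∑ i ∈ range (n+1), Φ i (a*b) (T (n-i) a b u v))
      = rigidG star T n Φ a b u v := rfl
  rw [this, hv]
  simp only [LinearMap.neg_apply, map_neg]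
  abel

open scoped Classical in
private noncomputable def rigidTower (star : Ω → Ω → A →ₗ[k] A →ₗ[k] A)
    (T : ℕ → Ω → Ω → A →ₗ[k] A →ₗ[k] A) : ℕ → ℕ → Ω → A →ₗ[k] A
  | 0 => fun i => if i = 0 then fun _ => LinearMap.id else fun _ => 0
  | n+1 =>
    if h : rigidKeyEx star T (n+1) (rigidTower star T n)
    then Function.update (rigidTower star T n) (n+1) h.choose
    else rigidTower star T n

private lemma rigidTower_mono (star : Ω → Ω → A →ₗ[k] A →ₗ[k] A)
    (T : ℕ → Ω → Ω → A →ₗ[k] A →ₗ[k] A) :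
    ∀ n i, i ≤ n → rigidTower star T n i = rigidTower star T i i := by
  intro n
  induction n with
  | zero => intro i hi; rw [Nat.le_zero.mp hi]
  | succ n ih =>
    intro i hi
    rcases Nat.lt_or_ge i (n+1) with h' | h'
    · have hi' : i ≤ n := by omega
      show (rigidTower star T (n+1)) i = _
      rw [rigidTower]
      split_ifs with hk
      · rw [Function.update_of_ne (by omega : i ≠ n+1)]
        exact ih i hi'
      · exact ih i hi'
    · have : i = n + 1 := by omega
      subst this
      rfl

end Rest


/-- If the second cohomology `H²_Ω(A,A)` of an Ω-associative
algebra vanishes (every 2-cocycle is a coboundary `d¹h`), then `A` is rigid: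
every formal deformation (given by its coefficient families `T i`, with
`T 0 = *` and the coefficientwise deformation equations) is equivalent to the
trivial deformation. -/
theorem omegaAssoc_rigid_of_H2_zero
    {k Ω A : Type*} [Field k] [CharZero k] [Monoid Ω]
    [AddCommGroup A] [Module k A]
    (star : Ω → Ω → A →ₗ[k] A →ₗ[k] A)
    (hassoc : ∀ (α β γ : Ω) (x y z : A),
      star (α * β) γ (star α β x y) z = star α (β * γ) x (star β γ y z))
    -- H²_Ω(A,A) = 0 : every 2-cocycle is a coboundary
    (hH2 : ∀ g : Ω → Ω → A →ₗ[k] A →ₗ[k] A,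
      (∀ (α β γ : Ω) (x y z : A),
        star α (β * γ) x (g β γ y z) - star (α * β) γ (g α β x y) z
          - g (α * β) γ (star α β x y) z + g α (β * γ) x (star β γ y z) = 0) →
      ∃ h : Ω → A →ₗ[k] A, ∀ (α β : Ω) (x y : A),
        g α β x y = star α β x (h β y) - h (α * β) (star α β x y)
          + star α β (h α x) y) :
    -- every formal deformation of A ...
    ∀ T : ℕ → Ω → Ω → A →ₗ[k] A →ₗ[k] A,
      (∀ (α β : Ω) (x y : A), T 0 α β x y = star α β x y) →
      (∀ (s : ℕ) (α β γ : Ω) (x y z : A),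
        ∑ i ∈ range (s + 1), T i α (β * γ) x (T (s - i) β γ y z)
          = ∑ i ∈ range (s + 1), T i (α * β) γ (T (s - i) α β x y) z) →
      -- ... is equivalent to the trivial deformation 𝔗̃ = T⁽⁰⁾
      ∃ Φ : ℕ → Ω → A →ₗ[k] A,
        (∀ ω : Ω, Φ 0 ω = LinearMap.id) ∧
        (∀ (s : ℕ) (α β : Ω) (x y : A),
          ∑ i ∈ range (s + 1), Φ i (α * β) (T (s - i) α β x y)
            = ∑ j ∈ range (s + 1), star α β (Φ j α x) (Φ (s - j) β y)) := by
  intro T hT0 h2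
  have inv : ∀ n, (∀ ω, rigidTower star T n 0 ω = LinearMap.id)
      ∧ (∀ i, n < i → ∀ ω, rigidTower star T n i ω = 0)
      ∧ (∀ r ≤ n, ∀ (a b : Ω) (u v : A),
          ∑ i ∈ range (r+1), rigidTower star T n i (a*b) (T (r-i) a b u v)
            = ∑ j ∈ range (r+1),
                star a b (rigidTower star T n j a u) (rigidTower star T n (r-j) b v)) := by
    intro n
    induction n with
    | zero =>
      refine ⟨fun ω => by simp [rigidTower], fun i hi ω => by
        simp only [rigidTower]
        rw [if_neg (by omega : ¬ i = 0)], fun r hr a b u v => ?_⟩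
      have : r = 0 := Nat.le_zero.mp hr
      subst this
      simp [rigidTower, hT0]
    | succ n ih =>
      obtain ⟨ih0, ihz, ihE⟩ := ih
      have hKE : rigidKeyEx star T (n+1) (rigidTower star T n) :=
        rigidKeyEx_of star T hassoc hT0 h2 hH2 (n+1) (by omega) (rigidTower star T n)
          ih0 (fun r hr => ihE r (by omega))
      have hFs : rigidTower star T (n+1)
          = Function.update (rigidTower star T n) (n+1) hKE.choose := by
        rw [rigidTower, dif_pos hKE]
      have spec := hKE.choose_spec
      have hz : ∀ ω, rigidTower star T n (n+1) ω = 0 := ihz (n+1) (by omega)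
      refine ⟨fun ω => ?_, fun i hi ω => ?_, fun r hr a b u v => ?_⟩
      · rw [hFs, Function.update_of_ne (by omega : (0:ℕ) ≠ n+1)]; exact ih0 ω
      · rw [hFs, Function.update_of_ne (by omega : i ≠ n+1)]; exact ihz i (by omega) ω
      · rcases Nat.lt_or_ge r (n+1) with h' | h'
        · have e1 : ∀ i ∈ range (r+1),
              rigidTower star T (n+1) i (a*b) (T (r-i) a b u v)
                = rigidTower star T n i (a*b) (T (r-i) a b u v) := fun i hi => by
            simp only [mem_range, Nat.lt_succ_iff] at hi
            rw [hFs, Function.update_of_ne (by omega : i ≠ n+1)]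
          have e2 : ∀ j ∈ range (r+1),
              star a b (rigidTower star T (n+1) j a u)
                  (rigidTower star T (n+1) (r-j) b v)
                = star a b (rigidTower star T n j a u)
                    (rigidTower star T n (r-j) b v) := fun j hj => by
            simp only [mem_range, Nat.lt_succ_iff] at hj
            rw [hFs, Function.update_of_ne (by omega : j ≠ n+1),
              Function.update_of_ne (by omega : r - j ≠ n+1)]
          rw [Finset.sum_congr rfl e1, Finset.sum_congr rfl e2]
          exact ihE r (by omega) a b u v
        · have : r = n + 1 := by omega
          subst this
          have hL : (∑ i ∈ range (n+1+1),
                rigidTower star T (n+1) i (a*b) (T (n+1-i) a b u v))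
              = (∑ i ∈ range (n+1+1),
                  rigidTower star T n i (a*b) (T (n+1-i) a b u v))
                + hKE.choose (a*b) (star a b u v) := by
            rw [Finset.sum_range_succ
                (fun i => rigidTower star T (n+1) i (a*b) (T (n+1-i) a b u v)) (n+1),
              Finset.sum_range_succ
                (fun i => rigidTower star T n i (a*b) (T (n+1-i) a b u v)) (n+1)]
            have hmid : ∑ i ∈ range (n+1),
                rigidTower star T (n+1) i (a*b) (T (n+1-i) a b u v)
                  = ∑ i ∈ range (n+1),
                      rigidTower star T n i (a*b) (T (n+1-i) a b u v) :=
              Finset.sum_congr rfl fun i hi => by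
                simp only [mem_range] at hi
                rw [hFs, Function.update_of_ne (by omega : i ≠ n+1)]
            rw [hmid, hFs, Function.update_self,
              show n+1-(n+1) = 0 from by omega, hT0, hz]
            simp only [LinearMap.zero_apply, add_zero]
          have hR : (∑ j ∈ range (n+1+1),
                star a b (rigidTower star T (n+1) j a u)
                  (rigidTower star T (n+1) (n+1-j) b v))
              = (∑ j ∈ range (n+1+1),
                  star a b (rigidTower star T n j a u)
                    (rigidTower star T n (n+1-j) b v))
                + star a b u (hKE.choose b v) + star a b (hKE.choose a u) v := by
            rw [Finset.sum_range_succ'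
                (fun j => star a b (rigidTower star T (n+1) j a u)
                  (rigidTower star T (n+1) (n+1-j) b v)) (n+1),
              Finset.sum_range_succ'
                (fun j => star a b (rigidTower star T n j a u)
                  (rigidTower star T n (n+1-j) b v)) (n+1),
              Finset.sum_range_succ
                (fun j => star a b (rigidTower star T (n+1) (j+1) a u)
                  (rigidTower star T (n+1) (n+1-(j+1)) b v)) n,
              Finset.sum_range_succ
                (fun j => star a b (rigidTower star T n (j+1) a u)
                  (rigidTower star T n (n+1-(j+1)) b v)) n]
            have hmid : ∑ j ∈ range n,
                star a b (rigidTower star T (n+1) (j+1) a u)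
                  (rigidTower star T (n+1) (n+1-(j+1)) b v)
                  = ∑ j ∈ range n,
                      star a b (rigidTower star T n (j+1) a u)
                        (rigidTower star T n (n+1-(j+1)) b v) :=
              Finset.sum_congr rfl fun j hj => by
                simp only [mem_range] at hj
                rw [hFs, Function.update_of_ne (by omega : j+1 ≠ n+1),
                  Function.update_of_ne (by omega : n+1-(j+1) ≠ n+1)]
            rw [hmid, hFs]
            simp only [Nat.sub_self, Nat.sub_zero, Nat.add_sub_cancel,
              Function.update_self]
            rw [show (Function.update (rigidTower star T n) (n+1) hKE.choose 0 : Ω → A →ₗ[k] A)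
                = rigidTower star T n 0 from Function.update_of_ne (by omega) _ _]
            simp only [ih0, hz, LinearMap.zero_apply, LinearMap.id_coe, id_eq,
              map_zero]
            abel
          rw [hL, hR]
          have sp := spec a b u v
          rw [sub_eq_iff_eq_add] at sp
          rw [sp]
          abel
  refine ⟨fun s => rigidTower star T s s, fun ω => by simp [rigidTower], fun s a b u v => ?_⟩
  have h := (inv s).2.2 s le_rfl a b u v
  have e1 : ∀ i ∈ range (s+1), rigidTower star T s i = rigidTower star T i i :=
    fun i hi => rigidTower_mono star T s i (by simp only [mem_range, Nat.lt_succ_iff] at hi; omega)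
  calc ∑ i ∈ range (s+1), rigidTower star T i i (a*b) (T (s-i) a b u v)
      = ∑ i ∈ range (s+1), rigidTower star T s i (a*b) (T (s-i) a b u v) :=
        Finset.sum_congr rfl fun i hi => by rw [e1 i hi]
    _ = ∑ j ∈ range (s+1),
          star a b (rigidTower star T s j a u) (rigidTower star T s (s-j) b v) := h
    _ = ∑ j ∈ range (s+1),
          star a b (rigidTower star T j j a u)
            (rigidTower star T (s-j) (s-j) b v) :=
        Finset.sum_congr rfl fun j hj => by
          rw [e1 j hj, rigidTower_mono star T s (s-j)
            (by simp only [mem_range, Nat.lt_succ_iff] at hj; omega)]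
end

section
/- Let Ω be a semigroup with unit and A an Ω-associative algebra. If 𝔗ᵗ_{α,β} = Σᵢ T⁽ⁱ⁾_{α,β} tⁱ is a formal deformation of A, then the infinitesimal T⁽¹⁾ = (T⁽¹⁾_{α,β}) is a 2-cocycle: a *_{α,βγ} T⁽¹⁾_{β,γ}(b,c) − T⁽¹⁾_{α,β}(a,b) *_{αβ,γ} c − T⁽¹⁾_{αβ,γ}(a *_{α,β} b, c) + T⁽¹⁾_{α,βγ}(a, b *_{β,γ} c) = 0 for all a,b,c∈A and α,β,γ∈Ω. Moreover, if 𝔗 and 𝔗̃ are equivalent deformations via maps Φᵗ_ω = id + φ⁽¹⁾_ω t + ⋯, then T⁽¹⁾ − T̃⁽¹⁾ = d¹φ⁽¹⁾, i.e., (T⁽¹⁾_{α,β} − T̃⁽¹⁾_{α,β})(x,y) = φ⁽¹⁾_α(x) *_{α,β} y + x *_{α,β} φ⁽¹⁾_β(y) − φ⁽¹⁾_{αβ}(x *_{α,β} y). -/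
open Finset

/-- For a formal deformation `𝔗 = Σ T⁽ⁱ⁾tⁱ` of an Ω-associative
algebra, the infinitesimal `T⁽¹⁾` is a 2-cocycle; moreover for two equivalent
deformations `𝔗, 𝔗̃` via `Φᵗ_ω = id + φ⁽¹⁾_ω t + ⋯`, one has
`T⁽¹⁾ − T̃⁽¹⁾ = d¹φ⁽¹⁾`. -/
theorem deformation_infinitesimal_cocycle_and_difference_coboundary
    {k Ω A : Type*} [Field k] [Monoid Ω] [AddCommGroup A] [Module k A]
    (star : Ω → Ω → A →ₗ[k] A →ₗ[k] A)
    (hassoc : ∀ (α β γ : Ω) (x y z : A),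
      star (α * β) γ (star α β x y) z = star α (β * γ) x (star β γ y z))
    (T : ℕ → Ω → Ω → A →ₗ[k] A →ₗ[k] A)
    (hT0 : ∀ (α β : Ω) (x y : A), T 0 α β x y = star α β x y)
    (hTdef : ∀ (s : ℕ) (α β γ : Ω) (x y z : A),
      ∑ i ∈ range (s + 1), T i α (β * γ) x (T (s - i) β γ y z)
        = ∑ i ∈ range (s + 1), T i (α * β) γ (T (s - i) α β x y) z) :
    -- (1) T⁽¹⁾ is a 2-cocycle
    (∀ (α β γ : Ω) (a b c : A),
      star α (β * γ) a (T 1 β γ b c) - star (α * β) γ (T 1 α β a b) c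
        - T 1 (α * β) γ (star α β a b) c + T 1 α (β * γ) a (star β γ b c) = 0)
    -- (2) equivalent deformations have cohomologous infinitesimals
    ∧ (∀ (Ttil : ℕ → Ω → Ω → A →ₗ[k] A →ₗ[k] A)
        (Φ : ℕ → Ω → A →ₗ[k] A),
        (∀ (α β : Ω) (x y : A), Ttil 0 α β x y = star α β x y) →
        (∀ (s : ℕ) (α β γ : Ω) (x y z : A),
          ∑ i ∈ range (s + 1), Ttil i α (β * γ) x (Ttil (s - i) β γ y z)
            = ∑ i ∈ range (s + 1), Ttil i (α * β) γ (Ttil (s - i) α β x y) z) →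
        (∀ ω : Ω, Φ 0 ω = LinearMap.id) →
        (∀ (s : ℕ) (α β : Ω) (x y : A),
          ∑ i ∈ range (s + 1), Φ i (α * β) (T (s - i) α β x y)
            = ∑ i ∈ range (s + 1), ∑ j ∈ range (s + 1 - i),
                Ttil i α β (Φ j α x) (Φ (s - i - j) β y)) →
        ∀ (α β : Ω) (x y : A),
          T 1 α β x y - Ttil 1 α β x y
            = star α β (Φ 1 α x) y + star α β x (Φ 1 β y)
              - Φ 1 (α * β) (star α β x y)) := by
  constructor
  · intro α β γ a b c
    have h := hTdef 1 α β γ a b c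
    simp only [Finset.sum_range_succ, Finset.sum_range_zero, zero_add, hT0] at h
    linear_combination (norm := abel) h
  · intro Ttil Φ hTtil0 _ hΦ0 hcomp α β x y
    have h := hcomp 1 α β x y
    simp only [Finset.sum_range_succ, Finset.sum_range_zero, zero_add, hT0, hTtil0, hΦ0,
      LinearMap.id_coe, id_eq] at h
    linear_combination (norm := abel) h
end
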